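/- arXiv:1704.06964 — 6 statements merged into one kernel-verified Lean document; each statement's English description precedes it below -/
import Mathlib

section
/- Let L_i = a_i·X₀ + b_i·X₁ + c_i·X₂ (i = 1,…,6) be six linear forms in ℂ[X₀,X₁,X₂] such that the six squares L₁²,…,L₆² are linearly independent over ℂ and such that L₁⁴ + L₂⁴ + ⋯ + L₆⁴ = F₄, where F₄ = X₀³X₁ + X₁³X₂ + X₀X₂³ is the Klein quartic. Then for all indices i ≠ j one has a_j·b_j·a_i² + a_j²·a_i·b_i + c_j²·a_i·c_i + b_j·c_j·b_i² + b_j²·b_i·c_i + a_j·c_j·c_i² = 0. -/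
open MvPolynomial

/-- Applying a second-order differential operator to the fourth power of a linear form. -/
private lemma klein_Dterm (p q r x y z : ℂ) :
    let L : MvPolynomial (Fin 3) ℂ := C x * X 0 + C y * X 1 + C z * X 2
    C (p*q) * pderiv 0 (pderiv 0 (L^4)) + C (q*r) * pderiv 1 (pderiv 1 (L^4))
      + C (p*r) * pderiv 2 (pderiv 2 (L^4)) + C (p^2) * pderiv 0 (pderiv 1 (L^4))
      + C (q^2) * pderiv 1 (pderiv 2 (L^4)) + C (r^2) * pderiv 0 (pderiv 2 (L^4))
    = C (12 * (p*q*x^2 + p^2*x*y + r^2*x*z + q*r*y^2 + q^2*y*z + p*r*z^2)) * L^2 := by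
  intro L
  simp only [L, show (4:ℕ) = 2+2 from rfl, pow_add, pow_two, pderiv_mul, map_add, pderiv_C,
    pderiv_X, map_mul, map_ofNat, map_pow]
  simp [Pi.single, Function.update]
  ring

/-- Applying the same operator to the Klein quartic yields `3 L²`. -/
private lemma klein_DF (p q r : ℂ) :
    let F : MvPolynomial (Fin 3) ℂ := X 0 ^ 3 * X 1 + X 1 ^ 3 * X 2 + X 0 * X 2 ^ 3
    C (p*q) * pderiv 0 (pderiv 0 F) + C (q*r) * pderiv 1 (pderiv 1 F)
      + C (p*r) * pderiv 2 (pderiv 2 F) + C (p^2) * pderiv 0 (pderiv 1 F)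
      + C (q^2) * pderiv 1 (pderiv 2 F) + C (r^2) * pderiv 0 (pderiv 2 F)
    = C 3 * (C p * X 0 + C q * X 1 + C r * X 2)^2 := by
  intro F
  simp only [F, show (3:ℕ) = 2+1 from rfl, pow_add, pow_two, pow_one, pderiv_mul, map_add,
    pderiv_C, pderiv_X, map_mul, map_ofNat]
  simp [Pi.single, Function.update]
  ring

/-- **Apolarity of power-sum decompositions of the Klein quartic.**
If `L i = a i • X₀ + b i • X₁ + c i • X₂`, `i = 1,…,6`, are six linear forms whose squares
are linearly independent over `ℂ` and such that `∑ i, (L i)⁴` equals the Klein quartic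
`F₄ = X₀³X₁ + X₁³X₂ + X₀X₂³`, then for all `i ≠ j` the apolarity relation
`aⱼbⱼaᵢ² + aⱼ²aᵢbᵢ + cⱼ²aᵢcᵢ + bⱼcⱼbᵢ² + bⱼ²bᵢcᵢ + aⱼcⱼcᵢ² = 0` holds. -/
theorem klein_decomposition_apolarity (a b c : Fin 6 → ℂ)
    (L : Fin 6 → MvPolynomial (Fin 3) ℂ)
    (hL : ∀ i, L i = C (a i) * X 0 + C (b i) * X 1 + C (c i) * X 2)
    (hind : LinearIndependent ℂ fun i => (L i) ^ 2)
    (hsum : ∑ i, (L i) ^ 4 =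
      X 0 ^ 3 * X 1 + X 1 ^ 3 * X 2 + X 0 * X 2 ^ 3) :
    ∀ i j : Fin 6, i ≠ j →
      a j * b j * (a i) ^ 2 + (a j) ^ 2 * (a i) * (b i) + (c j) ^ 2 * (a i) * (c i)
        + b j * c j * (b i) ^ 2 + (b j) ^ 2 * (b i) * (c i) + a j * c j * (c i) ^ 2 = 0 := by
  intro i j hij
  set p := a j with hp
  set q := b j with hq
  set r := c j with hr
  -- the apolarity quantity
  set B : Fin 6 → ℂ := fun i =>
    p*q*(a i)^2 + p^2*(a i)*(b i) + r^2*(a i)*(c i) + q*r*(b i)^2 + q^2*(b i)*(c i)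
      + p*r*(c i)^2 with hB
  -- apply the second order operator associated to `j` to both sides of `hsum`
  have key : ∑ k, C (12 * B k) * (L k)^2 = C 3 * (L j)^2 := by
    have h1 : ∀ k : Fin 6,
        C (p*q) * pderiv 0 (pderiv 0 ((L k)^4)) + C (q*r) * pderiv 1 (pderiv 1 ((L k)^4))
          + C (p*r) * pderiv 2 (pderiv 2 ((L k)^4)) + C (p^2) * pderiv 0 (pderiv 1 ((L k)^4))
          + C (q^2) * pderiv 1 (pderiv 2 ((L k)^4)) + C (r^2) * pderiv 0 (pderiv 2 ((L k)^4))
        = C (12 * B k) * (L k)^2 := by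
      intro k
      rw [hL k]
      exact klein_Dterm p q r (a k) (b k) (c k)
    calc ∑ k, C (12 * B k) * (L k)^2
        = ∑ k, (C (p*q) * pderiv 0 (pderiv 0 ((L k)^4))
            + C (q*r) * pderiv 1 (pderiv 1 ((L k)^4))
            + C (p*r) * pderiv 2 (pderiv 2 ((L k)^4))
            + C (p^2) * pderiv 0 (pderiv 1 ((L k)^4))
            + C (q^2) * pderiv 1 (pderiv 2 ((L k)^4))
            + C (r^2) * pderiv 0 (pderiv 2 ((L k)^4))) :=
          Finset.sum_congr rfl (fun k _ => (h1 k).symm)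
      _ = C (p*q) * pderiv 0 (pderiv 0 (∑ k, (L k)^4))
            + C (q*r) * pderiv 1 (pderiv 1 (∑ k, (L k)^4))
            + C (p*r) * pderiv 2 (pderiv 2 (∑ k, (L k)^4))
            + C (p^2) * pderiv 0 (pderiv 1 (∑ k, (L k)^4))
            + C (q^2) * pderiv 1 (pderiv 2 (∑ k, (L k)^4))
            + C (r^2) * pderiv 0 (pderiv 2 (∑ k, (L k)^4)) := by
          simp only [map_sum, Finset.mul_sum, Finset.sum_add_distrib]
      _ = C 3 * (L j)^2 := by
          rw [hsum, hL j]
          exact klein_DF p q r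
  -- use linear independence of the squares
  set g : Fin 6 → ℂ := fun k => 12 * B k - (if k = j then 3 else 0) with hg
  have h0 : ∑ k, g k • (L k)^2 = 0 := by
    have hterm : ∀ k, g k • (L k)^2
        = C (12 * B k) * (L k)^2 - (if k = j then C 3 * (L k)^2 else 0) := by
      intro k
      by_cases h : k = j <;>
        simp [hg, h, smul_eq_C_mul, map_sub, sub_mul, map_mul, map_ofNat]
    rw [Finset.sum_congr rfl (fun k _ => hterm k), Finset.sum_sub_distrib, key,
      Finset.sum_ite_eq' Finset.univ j (fun k => C 3 * (L k)^2)]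
    simp
  have hzero := Fintype.linearIndependent_iff.mp hind g h0 i
  have : 12 * B i = 0 := by
    simpa [hg, hij] using hzero
  have hBi : B i = 0 := by
    linear_combination this / 12
  simpa [hB] using hBi
end

section
/- For all complex numbers a₁,b₁,c₁,a₂,b₂,c₂, applying to the Klein quartic F₄ = X₀³X₁ + X₁³X₂ + X₀X₂³ the composition of second-order directional derivative operators D_{u}² ∘ D_{v}², where D_u(P) = a₁·∂P/∂X₀ + b₁·∂P/∂X₁ + c₁·∂P/∂X₂ and D_v(P) = a₂·∂P/∂X₀ + b₂·∂P/∂X₁ + c₂·∂P/∂X₂, yields the constant polynomial 12·(a₂b₂a₁² + a₂²a₁b₁ + c₂²a₁c₁ + b₂c₂b₁² + b₂²b₁c₁ + a₂c₂c₁²). -/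
open MvPolynomial


lemma pderiv_ofNat (i : Fin 3) (n : ℕ) [n.AtLeastTwo] :
    pderiv i (no_index (OfNat.ofNat n) : MvPolynomial (Fin 3) ℂ) = 0 := by
  have h : (no_index (OfNat.ofNat n) : MvPolynomial (Fin 3) ℂ) = ((n : ℕ) : MvPolynomial (Fin 3) ℂ) := by
    norm_cast
  rw [h]; exact (pderiv (R := ℂ) i).map_natCast _

set_option maxHeartbeats 1600000 in
/-- **The catalecticant bilinear form of the Klein quartic on squares of linear forms.**
Applying `D_u² ∘ D_v²` to the Klein quartic `F₄ = X₀³X₁ + X₁³X₂ + X₀X₂³`, where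
`D_u = a₁·∂₀ + b₁·∂₁ + c₁·∂₂` and `D_v = a₂·∂₀ + b₂·∂₁ + c₂·∂₂`, yields the constant
polynomial `12·(a₂b₂a₁² + a₂²a₁b₁ + c₂²a₁c₁ + b₂c₂b₁² + b₂²b₁c₁ + a₂c₂c₁²)`. -/
theorem klein_catalecticant (a₁ b₁ c₁ a₂ b₂ c₂ : ℂ)
    (Du Dv : MvPolynomial (Fin 3) ℂ → MvPolynomial (Fin 3) ℂ)
    (hDu : ∀ P, Du P = C a₁ * pderiv 0 P + C b₁ * pderiv 1 P + C c₁ * pderiv 2 P)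
    (hDv : ∀ P, Dv P = C a₂ * pderiv 0 P + C b₂ * pderiv 1 P + C c₂ * pderiv 2 P) :
    Du (Du (Dv (Dv (X 0 ^ 3 * X 1 + X 1 ^ 3 * X 2 + X 0 * X 2 ^ 3)))) =
      C (12 * (a₂ * b₂ * a₁ ^ 2 + a₂ ^ 2 * a₁ * b₁ + c₂ ^ 2 * a₁ * c₁
        + b₂ * c₂ * b₁ ^ 2 + b₂ ^ 2 * b₁ * c₁ + a₂ * c₂ * c₁ ^ 2)) := by
  have h1 : Dv (X 0 ^ 3 * X 1 + X 1 ^ 3 * X 2 + X 0 * X 2 ^ 3) =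
      C a₂ * (3 * X 0 ^ 2 * X 1 + X 2 ^ 3) + C b₂ * (X 0 ^ 3 + 3 * X 1 ^ 2 * X 2)
        + C c₂ * (X 1 ^ 3 + 3 * X 0 * X 2 ^ 2) := by
    rw [hDv]
    simp [Derivation.leibniz, Derivation.leibniz_pow, pderiv_X, Pi.single_apply, pderiv_ofNat]
    ring
  have h2 : Dv (C a₂ * (3 * X 0 ^ 2 * X 1 + X 2 ^ 3) + C b₂ * (X 0 ^ 3 + 3 * X 1 ^ 2 * X 2)
        + C c₂ * (X 1 ^ 3 + 3 * X 0 * X 2 ^ 2) : MvPolynomial (Fin 3) ℂ) =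
      6 * (C a₂ * C b₂ * X 0 ^ 2 + C a₂ * C a₂ * X 0 * X 1 + C a₂ * C c₂ * X 2 ^ 2
        + C b₂ * C b₂ * X 1 * X 2 + C b₂ * C c₂ * X 1 ^ 2 + C c₂ * C c₂ * X 0 * X 2) := by
    rw [hDv]
    simp [Derivation.leibniz, Derivation.leibniz_pow, pderiv_X, Pi.single_apply, pderiv_ofNat]
    ring
  have h3 : Du (6 * (C a₂ * C b₂ * X 0 ^ 2 + C a₂ * C a₂ * X 0 * X 1 + C a₂ * C c₂ * X 2 ^ 2
        + C b₂ * C b₂ * X 1 * X 2 + C b₂ * C c₂ * X 1 ^ 2 + C c₂ * C c₂ * X 0 * X 2)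
        : MvPolynomial (Fin 3) ℂ) =
      6 * (C a₁ * (2 * C a₂ * C b₂ * X 0 + C a₂ * C a₂ * X 1 + C c₂ * C c₂ * X 2)
        + C b₁ * (C a₂ * C a₂ * X 0 + 2 * C b₂ * C c₂ * X 1 + C b₂ * C b₂ * X 2)
        + C c₁ * (C c₂ * C c₂ * X 0 + C b₂ * C b₂ * X 1 + 2 * C a₂ * C c₂ * X 2)) := by
    rw [hDu]
    simp [Derivation.leibniz, Derivation.leibniz_pow, pderiv_X, Pi.single_apply, pderiv_ofNat]
    ring
  have h4 : Du (6 * (C a₁ * (2 * C a₂ * C b₂ * X 0 + C a₂ * C a₂ * X 1 + C c₂ * C c₂ * X 2)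
        + C b₁ * (C a₂ * C a₂ * X 0 + 2 * C b₂ * C c₂ * X 1 + C b₂ * C b₂ * X 2)
        + C c₁ * (C c₂ * C c₂ * X 0 + C b₂ * C b₂ * X 1 + 2 * C a₂ * C c₂ * X 2))
        : MvPolynomial (Fin 3) ℂ) =
      C (12 * (a₂ * b₂ * a₁ ^ 2 + a₂ ^ 2 * a₁ * b₁ + c₂ ^ 2 * a₁ * c₁
        + b₂ * c₂ * b₁ ^ 2 + b₂ ^ 2 * b₁ * c₁ + a₂ * c₂ * c₁ ^ 2)) := by
    rw [hDu]
    simp [Derivation.leibniz, Derivation.leibniz_pow, pderiv_X, Pi.single_apply, pderiv_ofNat,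
      map_mul, map_add, map_pow, map_ofNat]
    ring
  rw [h1, h2, h3, h4]
end

section
/- Let D ∈ ℂ[a₁,b₁,c₁,a₂,b₂,c₂] be the polynomial D = a₁b₁a₂² + a₁²a₂b₂ + c₁²a₂c₂ + b₁c₁b₂² + b₁²b₂c₂ + a₁c₁c₂². For every pair of nonzero vectors u = (a₁,b₁,c₁) ∈ ℂ³∖{0} and v = (a₂,b₂,c₂) ∈ ℂ³∖{0} with D(u,v) = 0, not all six partial derivatives ∂D/∂a₁, ∂D/∂b₁, ∂D/∂c₁, ∂D/∂a₂, ∂D/∂b₂, ∂D/∂c₂ vanish at (u,v). (Equivalently, the hypersurface 𝒫₂ = {D = 0} of bidegree (2,2) in ℙ²×ℙ² is smooth.) -/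
open MvPolynomial

/-!
At a common zero `(u, v)` of the six partial derivatives of `D`, explicit Nullstellensatz
certificates put `(a₁a₂)⁴` and `(a₁b₂)⁴` in the ideal of the partials. Since `D` is invariant
under rotating the coordinates `a → b → c → a` of both factors and under exchanging the two
factors, these two products are carried to all nine products `uᵢvⱼ`. Hence `u ⊗ v = 0`, so
`u = 0` or `v = 0`.
-/

/-- The bidegree `(2,2)` apolarity polynomial of the Klein quartic, in the six variables
`a₁ = X 0`, `b₁ = X 1`, `c₁ = X 2`, `a₂ = X 3`, `b₂ = X 4`, `c₂ = X 5`: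
`D = a₁b₁a₂² + a₁²a₂b₂ + c₁²a₂c₂ + b₁c₁b₂² + b₁²b₂c₂ + a₁c₁c₂²`. -/
noncomputable def kleinApolarityPoly : MvPolynomial (Fin 6) ℂ :=
  X 0 * X 1 * X 3 ^ 2 + X 0 ^ 2 * X 3 * X 4 + X 2 ^ 2 * X 3 * X 5
    + X 1 * X 2 * X 4 ^ 2 + X 1 ^ 2 * X 4 * X 5 + X 0 * X 2 * X 5 ^ 2

structure IsKleinCritical {R : Type*} [CommRing R] (a₁ b₁ c₁ a₂ b₂ c₂ : R) : Prop where
  pderiv_a₁ : b₁ * a₂ ^ 2 + 2 * a₁ * a₂ * b₂ + c₁ * c₂ ^ 2 = 0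
  pderiv_b₁ : a₁ * a₂ ^ 2 + c₁ * b₂ ^ 2 + 2 * b₁ * b₂ * c₂ = 0
  pderiv_c₁ : 2 * c₁ * a₂ * c₂ + b₁ * b₂ ^ 2 + a₁ * c₂ ^ 2 = 0
  pderiv_a₂ : 2 * a₁ * b₁ * a₂ + a₁ ^ 2 * b₂ + c₁ ^ 2 * c₂ = 0
  pderiv_b₂ : a₁ ^ 2 * a₂ + 2 * b₁ * c₁ * b₂ + b₁ ^ 2 * c₂ = 0
  pderiv_c₂ : c₁ ^ 2 * a₂ + b₁ ^ 2 * b₂ + 2 * a₁ * c₁ * c₂ = 0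

theorem isKleinCritical_of_eval_pderiv {a₁ b₁ c₁ a₂ b₂ c₂ : ℂ}
    (h : ∀ k, eval ![a₁, b₁, c₁, a₂, b₂, c₂] (pderiv k kleinApolarityPoly) = 0) :
    IsKleinCritical a₁ b₁ c₁ a₂ b₂ c₂ := by
  simp only [kleinApolarityPoly, map_add, pderiv_mul, pderiv_pow, pderiv_X, eval_mul, eval_pow,
    eval_X, Pi.single_apply] at h
  constructor <;> [have := h 0; have := h 1; have := h 2; have := h 3; have := h 4; have := h 5] <;>
    simp only [Fin.reduceEq, zero_ne_one, one_ne_zero, ↓reduceIte, map_zero, map_one, Nat.cast_ofNat,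
      eval_ofNat, Matrix.cons_val, Matrix.cons_val_zero, Matrix.cons_val_one] at this <;>
    linear_combination this

namespace IsKleinCritical

section CommRing

variable {R : Type*} [CommRing R] {a₁ b₁ c₁ a₂ b₂ c₂ : R}

theorem rotate (h : IsKleinCritical a₁ b₁ c₁ a₂ b₂ c₂) : IsKleinCritical b₁ c₁ a₁ b₂ c₂ a₂ where
  pderiv_a₁ := by linear_combination h.pderiv_b₁
  pderiv_b₁ := by linear_combination h.pderiv_c₁
  pderiv_c₁ := by linear_combination h.pderiv_a₁
  pderiv_a₂ := by linear_combination h.pderiv_b₂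
  pderiv_b₂ := by linear_combination h.pderiv_c₂
  pderiv_c₂ := by linear_combination h.pderiv_a₂

theorem swap (h : IsKleinCritical a₁ b₁ c₁ a₂ b₂ c₂) : IsKleinCritical a₂ b₂ c₂ a₁ b₁ c₁ where
  pderiv_a₁ := by linear_combination h.pderiv_a₂
  pderiv_b₁ := by linear_combination h.pderiv_b₂
  pderiv_c₁ := by linear_combination h.pderiv_c₂
  pderiv_a₂ := by linear_combination h.pderiv_a₁
  pderiv_b₂ := by linear_combination h.pderiv_b₁
  pderiv_c₂ := by linear_combination h.pderiv_c₁

end CommRing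

variable {K : Type*} [Field K] [CharZero K] {a₁ b₁ c₁ a₂ b₂ c₂ : K}

/- The certificates below solve a linear system over `ℚ` in bidegree `(4, 4)`; no lower power of
`a₁a₂` or `a₁b₂` lies in the ideal of the partials. -/

theorem a₁_mul_a₂_eq_zero (h : IsKleinCritical a₁ b₁ c₁ a₂ b₂ c₂) : a₁ * a₂ = 0 := by
  refine pow_eq_zero_iff (n := 4) (by norm_num) |>.mp ?_
  linear_combination
    ((9/28)*c₁^3*a₂*c₂ + (-9/14)*b₁*c₁^2*b₂^2 + (-7/4)*b₁^2*c₁*b₂*c₂ + (-17/28)*b₁^3*c₂^2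
      + (3/56)*a₁*c₁^2*c₂^2 + (-5/56)*a₁*b₁*c₁*a₂^2 + (-5/28)*a₁^2*c₁*a₂*b₂
      + (-13/14)*a₁^2*b₁*a₂*c₂) * h.pderiv_a₁
    + ((-9/14)*c₁^3*b₂*c₂ + (-1/56)*b₁*c₁^2*c₂^2 + (5/56)*b₁^2*c₁*a₂^2 + (9/28)*a₁*b₁^2*a₂*c₂
      + (-9/14)*a₁^2*c₁*b₂^2 + (-1/7)*a₁^2*b₁*b₂*c₂ + a₁^3*a₂^2) * h.pderiv_b₁
    + ((-3/56)*c₁^3*c₂^2 + (-9/56)*b₁*c₁^2*a₂^2 + (9/28)*a₁*b₁*c₁*a₂*c₂) * h.pderiv_c₁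
    + ((9/14)*c₁^2*b₂^3 + (-3/14)*c₁^2*a₂*c₂^2 + (10/7)*b₁*c₁*b₂^2*c₂
      + (2/7)*b₁^2*b₂*c₂^2) * h.pderiv_a₂
    + ((2/7)*c₁^2*b₂*c₂^2 + (17/28)*b₁*c₁*c₂^3 + (5/14)*b₁*c₁*a₂^2*b₂
      + (17/28)*b₁^2*a₂^2*c₂) * h.pderiv_b₂

theorem a₁_mul_b₂_eq_zero (h : IsKleinCritical a₁ b₁ c₁ a₂ b₂ c₂) : a₁ * b₂ = 0 := by
  refine pow_eq_zero_iff (n := 4) (by norm_num) |>.mp ?_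
  linear_combination
    ((113/84)*b₁*c₁^2*b₂*c₂ + (115/84)*b₁^2*c₁*c₂^2 + (-75/28)*a₁*c₁^2*a₂^2
      + (2/3)*a₁*b₁^2*a₂*b₂ + (3/7)*a₁^2*c₁*a₂*c₂ - a₁^2*b₁*b₂^2) * h.pderiv_a₁
    + ((1/7)*c₁^3*c₂^2 + (-275/84)*b₁*c₁^2*a₂^2 + (15/14)*b₁^3*a₂*b₂
      + (-281/84)*a₁*b₁*c₁*a₂*c₂ + (15/28)*a₁*b₁^2*b₂^2 + (-6/7)*a₁^2*c₁*b₂*c₂) * h.pderiv_b₁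
    + ((-125/84)*c₁^3*a₂^2 + (-15/14)*b₁^2*c₁*a₂*b₂ + (-15/7)*b₁^3*a₂*c₂
      + (169/84)*a₁*c₁^2*a₂*c₂ + (-15/28)*a₁*b₁*c₁*b₂^2
      + (-15/14)*a₁*b₁^2*b₂*c₂) * h.pderiv_c₁
    + ((-1/7)*c₁^2*b₂^2*c₂ + (125/42)*c₁^2*a₂^3 + (13/4)*b₁*c₁*b₂*c₂^2 + (15/14)*b₁^2*c₂^3
      + (-73/84)*b₁^2*a₂^2*b₂ + a₁^2*b₂^3) * h.pderiv_a₂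
    + ((-205/84)*c₁^2*c₂^3 + (50/21)*c₁^2*a₂^2*b₂ + (35/12)*b₁*c₁*a₂^2*c₂) * h.pderiv_b₂

theorem a₁_mul_c₂_eq_zero (h : IsKleinCritical a₁ b₁ c₁ a₂ b₂ c₂) : a₁ * c₂ = 0 := by
  simpa only [mul_comm] using h.swap.rotate.rotate.a₁_mul_b₂_eq_zero

theorem a₁_eq_zero_or (h : IsKleinCritical a₁ b₁ c₁ a₂ b₂ c₂) :
    a₁ = 0 ∨ (a₂ = 0 ∧ b₂ = 0 ∧ c₂ = 0) := by
  by_cases ha₁ : a₁ = 0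
  · exact .inl ha₁
  · exact .inr ⟨(mul_eq_zero.mp h.a₁_mul_a₂_eq_zero).resolve_left ha₁,
      (mul_eq_zero.mp h.a₁_mul_b₂_eq_zero).resolve_left ha₁,
      (mul_eq_zero.mp h.a₁_mul_c₂_eq_zero).resolve_left ha₁⟩

theorem eq_zero_or (h : IsKleinCritical a₁ b₁ c₁ a₂ b₂ c₂) :
    (a₁ = 0 ∧ b₁ = 0 ∧ c₁ = 0) ∨ (a₂ = 0 ∧ b₂ = 0 ∧ c₂ = 0) := by
  refine or_iff_not_imp_right.mpr fun hv => ⟨?_, ?_, ?_⟩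
  · exact h.a₁_eq_zero_or.resolve_right hv
  · exact h.rotate.a₁_eq_zero_or.resolve_right fun ⟨hb, hc, ha⟩ => hv ⟨ha, hb, hc⟩
  · exact h.rotate.rotate.a₁_eq_zero_or.resolve_right fun ⟨hc, ha, hb⟩ => hv ⟨ha, hb, hc⟩

end IsKleinCritical

theorem P2_smooth_general (a₁ b₁ c₁ a₂ b₂ c₂ : ℂ)
    (hu : ![a₁, b₁, c₁] ≠ 0) (hv : ![a₂, b₂, c₂] ≠ 0) :
    ∃ k : Fin 6, eval ![a₁, b₁, c₁, a₂, b₂, c₂] (pderiv k kleinApolarityPoly) ≠ 0 := by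
  by_contra! hcrit
  rcases (isKleinCritical_of_eval_pderiv hcrit).eq_zero_or with ⟨ha, hb, hc⟩ | ⟨ha, hb, hc⟩
  · exact hu (by simp [ha, hb, hc])
  · exact hv (by simp [ha, hb, hc])

/-- **Smoothness of the bidegree `(2,2)` hypersurface `𝒫₂ ⊂ ℙ²×ℙ²`.**
At every point of the affine cone of `{D = 0}` with both `ℂ³`-components nonzero,
not all six partial derivatives of `D` vanish. -/
theorem P2_smooth (a₁ b₁ c₁ a₂ b₂ c₂ : ℂ)
    (hu : ![a₁, b₁, c₁] ≠ 0) (hv : ![a₂, b₂, c₂] ≠ 0)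
    (hD : eval ![a₁, b₁, c₁, a₂, b₂, c₂] kleinApolarityPoly = 0) :
    ∃ k : Fin 6, eval ![a₁, b₁, c₁, a₂, b₂, c₂] (pderiv k kleinApolarityPoly) ≠ 0 :=
  P2_smooth_general a₁ b₁ c₁ a₂ b₂ c₂ hu hv
end

section
/- The polynomial D = a₁b₁a₂² + a₁²a₂b₂ + c₁²a₂c₂ + b₁c₁b₂² + b₁²b₂c₂ + a₁c₁c₂², viewed as an element of the polynomial ring over ℂ in the six variables a₁,b₁,c₁,a₂,b₂,c₂, is irreducible. -/
/-!
A factor `g` of a nonzero homogeneous polynomial `p` of degree `n` with `g(0) ≠ 0` is constant: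
in `g(t • X) h(t • X) = p(X) tⁿ` the `t`-degrees and the `t`-orders of the two factors both add
up to `n`, and the `t`-order of `g(t • X)` is `0`. So in a proper factorization `D = g h` both
factors vanish at the origin, hence so do their images under any substitution of polynomials
without constant term, and neither image is a unit. It therefore suffices to find one such
substitution making `D` irreducible: a linear one sends `D` to `x³y + (x - z) z (x + 2z)²`,
which is linear in `y` with coprime coefficients.
-/

open MvPolynomial

namespace Polynomial

theorem eq_C_of_mul_eq_C_mul_X_pow {A : Type*} [CommRing A] [IsDomain A] {F G : A[X]} {a : A}
    {n : ℕ} (ha : a ≠ 0) (hFG : F * G = C a * X ^ n) (hF : F.coeff 0 ≠ 0) :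
    F = C (F.coeff 0) := by
  have hCa : C a * X ^ n ≠ 0 := by simp [ha]
  have hF0 : F ≠ 0 := by rintro rfl; simp at hF
  have hG0 : G ≠ 0 := by rintro rfl; exact hCa (by rw [← hFG, mul_zero])
  have hdeg : F.natDegree + G.natDegree = n := by
    rw [← natDegree_mul hF0 hG0, hFG, natDegree_C_mul_X_pow n a ha]
  have htrail : F.natTrailingDegree + G.natTrailingDegree = n := by
    rw [← natTrailingDegree_mul hF0 hG0, hFG, natTrailingDegree_mul_X_pow (by simpa using ha),
      natTrailingDegree_C, zero_add]
  have hF_trail : F.natTrailingDegree = 0 := natTrailingDegree_eq_zero.mpr (Or.inr hF)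
  have hG_le := natTrailingDegree_le_natDegree G
  exact eq_C_of_natDegree_eq_zero (by omega)

end Polynomial

namespace MvPolynomial

variable {σ τ R : Type*} [CommRing R]

/-- `p(t • X)` as a polynomial in `t`: its coefficient of `tᵏ` is the degree-`k` homogeneous
component of `p`. -/
noncomputable def scaleVars : MvPolynomial σ R →ₐ[R] Polynomial (MvPolynomial σ R) :=
  aeval fun i => Polynomial.C (X i) * Polynomial.X

theorem scaleVars_monomial (d : σ →₀ ℕ) (r : R) :
    scaleVars (monomial d r) = Polynomial.C (monomial d r) * Polynomial.X ^ d.degree := by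
  rw [scaleVars, monomial_eq, map_mul, aeval_C, Finsupp.prod, map_prod, Finsupp.degree_apply,
    ← Finset.prod_pow_eq_pow_sum, map_mul, Polynomial.algebraMap_apply, algebraMap_eq, map_prod,
    mul_assoc, ← Finset.prod_mul_distrib]
  simp only [map_pow, aeval_X, mul_pow]

theorem IsHomogeneous.scaleVars_eq {p : MvPolynomial σ R} {n : ℕ} (hp : p.IsHomogeneous n) :
    scaleVars p = Polynomial.C p * Polynomial.X ^ n := by
  rw [p.as_sum]
  simp only [map_sum, Finset.sum_mul]
  refine Finset.sum_congr rfl fun d hd => ?_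
  rw [scaleVars_monomial, Finsupp.degree_apply, ← hp.degree_eq_sum_deg_support hd]

theorem eval_one_scaleVars (p : MvPolynomial σ R) : (scaleVars p).eval 1 = p := by
  induction p using MvPolynomial.induction_on <;> simp_all [scaleVars]

theorem coeff_zero_scaleVars (p : MvPolynomial σ R) :
    (scaleVars p).coeff 0 = C (constantCoeff p) := by
  induction p using MvPolynomial.induction_on <;> simp_all [scaleVars, Polynomial.mul_coeff_zero]

theorem constantCoeff_aeval {f : σ → MvPolynomial τ R} (hf : ∀ i, constantCoeff (f i) = 0)
    (p : MvPolynomial σ R) : constantCoeff (aeval f p) = constantCoeff p := by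
  induction p using MvPolynomial.induction_on <;> simp_all

variable [IsDomain R]

theorem IsHomogeneous.eq_C_of_dvd {p g : MvPolynomial σ R} {n : ℕ} (hp : p.IsHomogeneous n)
    (hp0 : p ≠ 0) (hgp : g ∣ p) (hg : constantCoeff g ≠ 0) : g = C (constantCoeff g) := by
  obtain ⟨h, rfl⟩ := hgp
  have hscale : scaleVars g * scaleVars h = Polynomial.C (g * h) * Polynomial.X ^ n := by
    rw [← map_mul, hp.scaleVars_eq]
  have hconst := Polynomial.eq_C_of_mul_eq_C_mul_X_pow hp0 hscale
    (by rwa [coeff_zero_scaleVars, ne_eq, C_eq_zero])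
  rw [coeff_zero_scaleVars] at hconst
  simpa [eval_one_scaleVars] using congr_arg (Polynomial.eval 1) hconst

theorem IsHomogeneous.irreducible_of_irreducible_aeval {p : MvPolynomial σ R} {n : ℕ}
    (hp : p.IsHomogeneous n) {f : σ → MvPolynomial τ R} (hf : ∀ i, constantCoeff (f i) = 0)
    (hirr : Irreducible (MvPolynomial.aeval f p)) : Irreducible p := by
  have hp0 : p ≠ 0 := by rintro rfl; exact hirr.ne_zero (map_zero _)
  have isUnit_of_dvd {g : MvPolynomial σ R} (hg : g ∣ p)
      (hu : IsUnit (MvPolynomial.aeval f g)) : IsUnit g := by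
    have hc : IsUnit (constantCoeff g) := constantCoeff_aeval hf g ▸ hu.map constantCoeff
    rw [hp.eq_C_of_dvd hp0 hg hc.ne_zero]
    exact hc.map C
  refine ⟨fun hu => hirr.not_isUnit (hu.map _), fun g h hgh => ?_⟩
  rw [hgh, map_mul] at hirr
  exact (hirr.isUnit_or_isUnit rfl).imp (isUnit_of_dvd ⟨h, hgh⟩)
    (isUnit_of_dvd ⟨g, hgh.trans (mul_comm g h)⟩)

end MvPolynomial

theorem isHomogeneous_kleinApolarityPoly : kleinApolarityPoly.IsHomogeneous 4 := by
  have h112 (i j k : Fin 6) : (X i * X j * X k ^ 2 : MvPolynomial (Fin 6) ℂ).IsHomogeneous 4 :=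
    ((isHomogeneous_X ℂ i).mul (isHomogeneous_X ℂ j)).mul (isHomogeneous_X_pow k 2)
  have h211 (i j k : Fin 6) : (X i ^ 2 * X j * X k : MvPolynomial (Fin 6) ℂ).IsHomogeneous 4 :=
    ((isHomogeneous_X_pow i 2).mul (isHomogeneous_X ℂ j)).mul (isHomogeneous_X ℂ k)
  exact (((((h112 0 1 3).add (h211 0 3 4)).add (h211 2 3 5)).add (h112 1 2 4)).add
    (h211 1 4 5)).add (h112 0 2 5)

/-- `(a₁, b₁, c₁, a₂, b₂, c₂) ↦ (0, x - z, z, 3x - 2z, x + 2z, y)` with `x, z, y = X 0, X 1, X 2`.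
It is chosen so that the coefficient `c₁²a₂ + b₁²b₂` of `c₂` becomes `x³`, while the rest
`b₁c₁b₂²` of `D` becomes prime to `x`. -/
noncomputable def kleinSpecialization : Fin 6 → MvPolynomial (Fin 3) ℂ :=
  ![0, X 0 - X 1, X 1, 3 * X 0 - 2 * X 1, X 0 + 2 * X 1, X 2]

theorem constantCoeff_kleinSpecialization (i : Fin 6) :
    constantCoeff (kleinSpecialization i) = 0 := by
  fin_cases i <;> simp [kleinSpecialization]

theorem aeval_kleinSpecialization : aeval kleinSpecialization kleinApolarityPoly =
    X 0 ^ 3 * X 2 + (X 0 - X 1) * X 1 * (X 0 + 2 * X 1) ^ 2 := by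
  simp only [kleinApolarityPoly, map_add, map_mul, map_pow, aeval_X, kleinSpecialization,
    Matrix.cons_val]
  ring

theorem irreducible_aeval_kleinSpecialization :
    Irreducible (aeval kleinSpecialization kleinApolarityPoly) := by
  rw [aeval_kleinSpecialization]
  have hB : ((X 0 - X 1) * X 1 * (X 0 + 2 * X 1) ^ 2 : MvPolynomial (Fin 3) ℂ) ∈
      supported ℂ {0, 1} := by
    refine mul_mem (mul_mem (sub_mem ?_ ?_) ?_)
      (pow_mem (add_mem ?_ (mul_mem (ofNat_mem _ 2) ?_)) 2) <;>
      exact X_mem_supported.2 (by simp)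
  refine irreducible_mul_X_add _ _ 2 (pow_ne_zero _ (X_ne_zero _)) ?_ ?_ ?_
  · intro h
    simpa [vars_X] using vars_pow _ _ h
  · intro h
    simpa using mem_supported.1 hB h
  · refine IsRelPrime.pow_left ((X_prime (i := 0)).irreducible.isRelPrime_iff_not_dvd.2 ?_)
    intro h
    simpa using map_dvd (eval ![0, 1, 0]) h

/-- **Irreducibility of the apolarity polynomial of the Klein quartic** (the hypersurface
`𝒫₂ ⊂ ℙ²×ℙ²` is irreducible). -/
theorem kleinApolarityPoly_irreducible : Irreducible kleinApolarityPoly :=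
  IsHomogeneous.irreducible_of_irreducible_aeval isHomogeneous_kleinApolarityPoly
    constantCoeff_kleinSpecialization irreducible_aeval_kleinSpecialization
end

section
/- Let C(a,b,c) = ab⁵ + a⁵c − 5a²b²c² + bc⁵ ∈ ℂ[a,b,c]. For every nonzero vector (a,b,c) ∈ ℂ³∖{0} with C(a,b,c) = 0, the gradient of C at (a,b,c), namely (b⁵ + 5a⁴c − 10ab²c², 5ab⁴ − 10a²bc² + c⁵, a⁵ − 10a²b²c + 5bc⁴), is nonzero. (Equivalently, the plane sextic {C = 0} ⊂ ℙ² is smooth.) -/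
/-- **Smoothness of the discriminant sextic `C = {ab⁵ + a⁵c − 5a²b²c² + bc⁵ = 0} ⊂ ℙ²`.**
At every nonzero point of the affine cone of `C`, the gradient of the defining sextic
does not vanish. -/
theorem discriminant_sextic_smooth (a b c : ℂ) (h : ![a, b, c] ≠ 0)
    (hC : a * b ^ 5 + a ^ 5 * c - 5 * a ^ 2 * b ^ 2 * c ^ 2 + b * c ^ 5 = 0) :
    ![b ^ 5 + 5 * a ^ 4 * c - 10 * a * b ^ 2 * c ^ 2,
      5 * a * b ^ 4 - 10 * a ^ 2 * b * c ^ 2 + c ^ 5,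
      a ^ 5 - 10 * a ^ 2 * b ^ 2 * c + 5 * b * c ^ 4] ≠ 0 := by
  intro hg
  have h0 : b ^ 5 + 5 * a ^ 4 * c - 10 * a * b ^ 2 * c ^ 2 = 0 := congrFun hg 0
  have h1 : 5 * a * b ^ 4 - 10 * a ^ 2 * b * c ^ 2 + c ^ 5 = 0 := congrFun hg 1
  have h2 : a ^ 5 - 10 * a ^ 2 * b ^ 2 * c + 5 * b * c ^ 4 = 0 := congrFun hg 2
  have ha : a ^ 11 = 0 := by
    linear_combination ((-250/63 : ℂ)*c^6 + (-246875/12348 : ℂ)*a*b^4*c + (477625/12348 : ℂ)*a^2*b*c^3 + (9875/4116 : ℂ)*a^4*b^2) * h0 + ((49375/12348 : ℂ)*b^5*c + (-490675/12348 : ℂ)*a*b^2*c^3 + (-1975/4116 : ℂ)*a^3*b^3 + (1250/63 : ℂ)*a^4*c^2) * h1 + ((-25/4116 : ℂ)*b^4*c^2 + (15/1372 : ℂ)*a*b*c^4 + (-8215/4116 : ℂ)*a^3*b^2*c + a^6) * h2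
  have hb : b ^ 11 = 0 := by
    linear_combination (b^6 + (-8215/4116 : ℂ)*a*b^3*c^2 + (-25/4116 : ℂ)*a^2*c^4 + (15/1372 : ℂ)*a^4*b*c) * h0 + ((9875/4116 : ℂ)*b^4*c^2 + (-625/4116 : ℂ)*a*b*c^4 + (-1375/1372 : ℂ)*a^3*b^2*c) * h1 + ((-1975/4116 : ℂ)*b^3*c^3 + (125/4116 : ℂ)*a*c^5 + (-75/1372 : ℂ)*a^3*b*c^2) * h2
  have hc : c ^ 11 = 0 := by
    linear_combination ((-625/4116 : ℂ)*b^2*c^4 + (1025/4116 : ℂ)*a^2*b^3*c + (-1975/4116 : ℂ)*a^3*c^3) * h0 + (c^6 + (15/1372 : ℂ)*a*b^4*c + (-8215/4116 : ℂ)*a^2*b*c^3 + (-25/4116 : ℂ)*a^4*b^2) * h1 + ((125/4116 : ℂ)*b^6 + (-5375/4116 : ℂ)*a*b^3*c^2 + (9875/4116 : ℂ)*a^2*c^4) * h2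
  have ha' : a = 0 := pow_eq_zero_iff (n := 11) (by norm_num) |>.mp ha
  have hb' : b = 0 := pow_eq_zero_iff (n := 11) (by norm_num) |>.mp hb
  have hc' : c = 0 := pow_eq_zero_iff (n := 11) (by norm_num) |>.mp hc
  apply h
  funext i
  fin_cases i <;> simp [ha', hb', hc']
end

section
/- Let F₄ = X₀³X₁ + X₁³X₂ + X₀X₂³ be the Klein quartic and suppose L_i = a_i·X₀ + b_i·X₁ + c_i·X₂ (i = 1,…,6) are linear forms with L₁²,…,L₆² linearly independent over ℂ and L₁⁴ + ⋯ + L₆⁴ = F₄. Then for each pair of distinct indices i ≠ j, the point ((a_i,b_i,c_i),(a_j,b_j,c_j)) of ℂ³×ℂ³ lies on the affine cone of the hypersurface 𝒫₂ = {a₁b₁a₂² + a₁²a₂b₂ + c₁²a₂c₂ + b₁c₁b₂² + b₁²b₂c₂ + a₁c₁c₂² = 0}, and moreover each (a_i, b_i, c_i) is nonzero. -/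
open MvPolynomial

section KleinAux

private noncomputable def LL (a' b' c' : ℂ) : MvPolynomial (Fin 3) ℂ :=
  C a' * X 0 + C b' * X 1 + C c' * X 2

private lemma pderiv_three (v : Fin 3) : pderiv v (3 : MvPolynomial (Fin 3) ℂ) = 0 := by
  rw [← (map_ofNat (C : ℂ →+* MvPolynomial (Fin 3) ℂ) 3), pderiv_C]

private lemma pdL (a' b' c' : ℂ) (v : Fin 3) :
    pderiv v (LL a' b' c') = C (![a',b',c'] v) := by
  fin_cases v <;> simp [LL, pderiv_X]

private lemma pdL3 (a' b' c' : ℂ) (v : Fin 3) :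
    pderiv v ((LL a' b' c')^3) = C (3 * ![a',b',c'] v) * (LL a' b' c')^2 := by
  rw [Derivation.leibniz_pow, pdL]
  simp [smul_eq_mul, map_ofNat]; ring

private lemma pdL4 (a' b' c' : ℂ) (v : Fin 3) :
    pderiv v ((LL a' b' c')^4) = C (4 * ![a',b',c'] v) * (LL a' b' c')^3 := by
  rw [Derivation.leibniz_pow, pdL]
  simp [smul_eq_mul, map_ofNat]; ring

private lemma pd2 (a' b' c' : ℂ) (u v : Fin 3) :
    pderiv u (pderiv v ((LL a' b' c')^4))
      = C (12 * ![a',b',c'] u * ![a',b',c'] v) * (LL a' b' c')^2 := by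
  rw [pdL4, pderiv_C_mul, pdL3, ← mul_assoc, ← C_mul]
  ring_nf

/-- The second-order differential operator attached to the coefficients
`(p,q,r,s,t,u)`. -/
private noncomputable def T (p q r s t u : ℂ)
    (f : MvPolynomial (Fin 3) ℂ) : MvPolynomial (Fin 3) ℂ :=
  C p * pderiv 0 (pderiv 0 f) + C q * pderiv 1 (pderiv 1 f)
    + C r * pderiv 2 (pderiv 2 f) + C s * pderiv 0 (pderiv 1 f)
    + C t * pderiv 0 (pderiv 2 f) + C u * pderiv 1 (pderiv 2 f)

private lemma T_sum (p q r s t u : ℂ) (g : Fin 6 → MvPolynomial (Fin 3) ℂ) :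
    T p q r s t u (∑ k, g k) = ∑ k, T p q r s t u (g k) := by
  simp only [T, map_sum, Finset.mul_sum]
  rw [← Finset.sum_add_distrib, ← Finset.sum_add_distrib, ← Finset.sum_add_distrib,
    ← Finset.sum_add_distrib, ← Finset.sum_add_distrib]

private lemma T_L4 (p q r s t u a' b' c' : ℂ) :
    T p q r s t u ((LL a' b' c')^4)
      = C (12 * (p * a'^2 + q * b'^2 + r * c'^2 + s * (a'*b') + t * (a'*c') + u * (b'*c')))
          * (LL a' b' c')^2 := by
  simp only [T, pd2, Matrix.cons_val_zero, Matrix.cons_val_one, Matrix.head_cons,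
    Matrix.cons_val_two, Matrix.tail_cons]
  rw [← mul_assoc, ← mul_assoc, ← mul_assoc, ← mul_assoc, ← mul_assoc, ← mul_assoc,
    ← C_mul, ← C_mul, ← C_mul, ← C_mul, ← C_mul, ← C_mul,
    ← add_mul, ← add_mul, ← add_mul, ← add_mul, ← add_mul,
    ← C_add, ← C_add, ← C_add, ← C_add, ← C_add]
  congr 2
  ring

private lemma T_Klein (p q r s t u : ℂ) :
    T p q r s t u (X 0 ^ 3 * X 1 + X 1 ^ 3 * X 2 + X 0 * X 2 ^ 3)
      = C (3*s) * X 0 ^ 2 + C (3*u) * X 1 ^ 2 + C (3*t) * X 2 ^ 2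
        + C (6*p) * (X 0 * X 1) + C (6*r) * (X 0 * X 2) + C (6*q) * (X 1 * X 2) := by
  simp only [T]
  simp [pderiv_X, Derivation.leibniz, Derivation.leibniz_pow, smul_eq_mul, map_ofNat,
    pderiv_three]
  ring

end KleinAux

/-- **Power-sum decompositions of the Klein quartic land in (the affine cone of) `𝒫₂`.**
If `L i = a i • X₀ + b i • X₁ + c i • X₂`, `i = 1,…,6`, are six linear forms whose squares
are linearly independent over `ℂ` and with `∑ i, (L i)⁴` equal to the Klein quartic
`F₄ = X₀³X₁ + X₁³X₂ + X₀X₂³`, then each coefficient vector `(a i, b i, c i)` is nonzero,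
and for every pair of distinct indices `i ≠ j` the point `((aᵢ,bᵢ,cᵢ),(aⱼ,bⱼ,cⱼ))` lies on
the affine cone of the bidegree `(2,2)` hypersurface
`𝒫₂ = {a₁b₁a₂² + a₁²a₂b₂ + c₁²a₂c₂ + b₁c₁b₂² + b₁²b₂c₂ + a₁c₁c₂² = 0} ⊂ ℙ²×ℙ²`. -/
theorem klein_decomposition_lands_in_P2 (a b c : Fin 6 → ℂ)
    (L : Fin 6 → MvPolynomial (Fin 3) ℂ)
    (hL : ∀ i, L i = C (a i) * X 0 + C (b i) * X 1 + C (c i) * X 2)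
    (hind : LinearIndependent ℂ fun i => (L i) ^ 2)
    (hsum : ∑ i, (L i) ^ 4 =
      X 0 ^ 3 * X 1 + X 1 ^ 3 * X 2 + X 0 * X 2 ^ 3) :
    (∀ i : Fin 6, ![a i, b i, c i] ≠ 0) ∧
    ∀ i j : Fin 6, i ≠ j →
      a i * b i * (a j) ^ 2 + (a i) ^ 2 * (a j) * (b j) + (c i) ^ 2 * (a j) * (c j)
        + b i * c i * (b j) ^ 2 + (b i) ^ 2 * (b j) * (c j) + a i * c i * (c j) ^ 2 = 0 := by
  have hLL : ∀ i, L i = LL (a i) (b i) (c i) := fun i => hL i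
  constructor
  · intro i h
    have ha : a i = 0 := congrFun h 0
    have hb : b i = 0 := congrFun h 1
    have hc : c i = 0 := congrFun h 2
    have : (L i)^2 = 0 := by
      rw [hL i, ha, hb, hc]; simp
    exact hind.ne_zero i this
  · intro i j hij
    -- the quadratic form `P i k`
    set P : Fin 6 → Fin 6 → ℂ := fun i k =>
      a i * b i * (a k) ^ 2 + (a i) ^ 2 * (a k) * (b k) + (c i) ^ 2 * (a k) * (c k)
        + b i * c i * (b k) ^ 2 + (b i) ^ 2 * (b k) * (c k) + a i * c i * (c k) ^ 2 with hP
    -- apply the operator T to `hsum`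
    have hT := congrArg (T (a i * b i) (b i * c i) (a i * c i)
      ((a i)^2) ((c i)^2) ((b i)^2)) hsum
    rw [T_sum, T_Klein] at hT
    have hTL : ∀ k, T (a i * b i) (b i * c i) (a i * c i) ((a i)^2) ((c i)^2) ((b i)^2)
        ((L k)^4) = C (12 * P i k) * (L k)^2 := by
      intro k
      rw [hLL k, T_L4]
      congr 2
      simp only [hP]
      ring
    simp only [hTL] at hT
    -- rewrite the RHS as `3 * (L i)^2`
    have hRHS : C (3*(a i)^2) * X 0 ^ 2 + C (3*(b i)^2) * X 1 ^ 2 + C (3*(c i)^2) * X 2 ^ 2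
        + C (6*(a i * b i)) * ((X 0 : MvPolynomial (Fin 3) ℂ) * X 1)
        + C (6*(a i * c i)) * (X 0 * X 2) + C (6*(b i * c i)) * (X 1 * X 2)
        = C 3 * (L i)^2 := by
      rw [hL i]
      simp only [C_mul, C_pow, map_ofNat]
      ring
    rw [hRHS] at hT
    -- linear independence gives vanishing of the off-diagonal coefficients
    have key := (Fintype.linearIndependent_iff.mp hind)
      (fun k => 12 * P i k - if k = i then 3 else 0) ?_ j
    · rw [if_neg hij.symm, sub_zero] at key
      exact mul_left_cancel₀ (by norm_num : (12:ℂ) ≠ 0) (by rw [key, mul_zero])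
    · have : ∑ k, (12 * P i k - if k = i then 3 else 0) • (L k)^2
          = ∑ k, C (12 * P i k) * (L k)^2 - C 3 * (L i)^2 := by
        simp only [sub_smul, Finset.sum_sub_distrib, ite_smul, zero_smul]
        congr 1
        · exact Finset.sum_congr rfl fun k _ => by rw [smul_eq_C_mul]
        · rw [Finset.sum_ite_eq' Finset.univ i (fun k => (3:ℂ) • (L k)^2)]
          simp [smul_eq_C_mul]
      rw [this, hT, sub_self]
end
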